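/- For all Δ, x, y with x + 1 + (y + x) ≤ Δ, the containment B_Δ(x,y) ⊆ B_Δ(x+1, y+x) holds. -/

import Mathlib

/-!
Since multisets are unordered, concatenating patterns is pointwise addition of sets, which is
associative and commutative, and `[S]^k + [S]^l = [S]^(k+l)`. The hypothesis says that the head
length `d = Δ - x - y` of `B_Δ(x,y)` is `d' + x + 1`, where `d'` is the head length of
`B_Δ(x+1, y+x)`. So the head splits into a head of length `d'`, `x` letters from `[POX]` that join
the middle block, and one letter that joins the tail.
-/

inductive Lbl : Type
  | M | P | O | X
deriving DecidableEq

open Lbl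

/-- The set of multisets of `k` symbols, each drawn from `S`. -/
def FromSet (S : Set Lbl) (k : ℕ) : Set (Multiset Lbl) :=
  {m | Multiset.card m = k ∧ ∀ s ∈ m, s ∈ S}

/-- Concatenation of two pattern sets of multisets. -/
def concatP (A B : Set (Multiset Lbl)) : Set (Multiset Lbl) :=
  {m | ∃ a ∈ A, ∃ b ∈ B, m = a + b}

/-- `B_Δ(x,y)`: multisets matching `([MX][POX]^{d-1} | [OX]^d)[POX]^y[MPOX]^x`, `d = Δ-x-y`. -/
def Bset (Δ x y : ℕ) : Set (Multiset Lbl) :=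
  concatP (concatP ((concatP (FromSet {M, X} 1) (FromSet {P, O, X} (Δ - x - y - 1))) ∪
      FromSet {O, X} (Δ - x - y)) (FromSet {P, O, X} y)) (FromSet Set.univ x)

/-- `W_Δ(x,y)`: multisets matching `(M O^{d-1} | P^d) O^y X^x`, `d = Δ-x-y`. -/
def Wset (Δ x y : ℕ) : Set (Multiset Lbl) :=
  concatP (concatP ((concatP (FromSet {M} 1) (FromSet {O} (Δ - x - y - 1))) ∪
      FromSet {P} (Δ - x - y)) (FromSet {O} y)) (FromSet {X} x)

open scoped Pointwise

theorem Multiset.exists_le_card_eq {α : Type*} {s : Multiset α} {n : ℕ} (h : n ≤ card s) :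
    ∃ t ≤ s, card t = n := by
  have hne : powersetCard n s ≠ 0 := by
    rw [← Multiset.card_pos, card_powersetCard]
    exact Nat.choose_pos h
  obtain ⟨t, ht⟩ := Multiset.exists_mem_of_ne_zero hne
  exact ⟨t, mem_powersetCard.1 ht⟩

theorem concatP_eq_add (A B : Set (Multiset Lbl)) : concatP A B = A + B := by
  ext m
  simp [concatP, Set.mem_add, eq_comm]

@[gcongr]
theorem fromSet_mono {S T : Set Lbl} (hST : S ⊆ T) (k : ℕ) : FromSet S k ⊆ FromSet T k :=
  fun _ ⟨hcard, hm⟩ => ⟨hcard, fun s hs => hST (hm s hs)⟩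

theorem fromSet_zero (S : Set Lbl) : FromSet S 0 = 0 := by
  ext m
  simp +contextual [FromSet]

theorem fromSet_add (S : Set Lbl) (k l : ℕ) : FromSet S k + FromSet S l = FromSet S (k + l) := by
  ext m
  constructor
  · rintro ⟨a, ⟨rfl, ha⟩, b, ⟨rfl, hb⟩, rfl⟩
    refine ⟨Multiset.card_add a b, fun s hs => ?_⟩
    rcases Multiset.mem_add.1 hs with hs | hs
    exacts [ha s hs, hb s hs]
  · rintro ⟨hcard, hm⟩
    obtain ⟨a, hle, ha⟩ := Multiset.exists_le_card_eq (hcard ▸ Nat.le_add_right k l)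
    obtain ⟨b, rfl⟩ := Multiset.le_iff_exists_add.1 hle
    refine ⟨a, ⟨ha, fun s hs => hm s (by simp [hs])⟩, b, ⟨?_, fun s hs => hm s (by simp [hs])⟩, rfl⟩
    rw [Multiset.card_add, ha] at hcard
    omega

def headSet (d : ℕ) : Set (Multiset Lbl) :=
  FromSet {M, X} 1 + FromSet {P, O, X} (d - 1) ∪ FromSet {O, X} d

theorem bset_eq_add (Δ x y : ℕ) :
    Bset Δ x y = headSet (Δ - x - y) + FromSet {P, O, X} y + FromSet Set.univ x := by
  simp only [Bset, headSet, concatP_eq_add]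

theorem headSet_subset_add (d x : ℕ) :
    headSet (d + x + 1) ⊆ headSet d + FromSet {P, O, X} x + FromSet Set.univ 1 := by
  refine Set.union_subset ?_ ?_
  · rcases d with _ | d
    -- the `[MX]` letter moves to the tail, leaving the empty head `[OX]^0`
    · calc FromSet {M, X} 1 + FromSet {P, O, X} (0 + x + 1 - 1)
          ⊆ 0 + FromSet {P, O, X} x + FromSet Set.univ 1 := by
            rw [show 0 + x + 1 - 1 = x by omega, zero_add, add_comm]
            gcongr
            exact Set.subset_univ _
        _ ⊆ headSet 0 + FromSet {P, O, X} x + FromSet Set.univ 1 := by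
            gcongr
            rw [← fromSet_zero {O, X}]
            exact Set.subset_union_right
    · calc FromSet {M, X} 1 + FromSet {P, O, X} (d + 1 + x + 1 - 1)
          = FromSet {M, X} 1 + FromSet {P, O, X} d + FromSet {P, O, X} x
              + FromSet {P, O, X} 1 := by
            rw [show d + 1 + x + 1 - 1 = d + x + 1 by omega]
            simp only [← fromSet_add, add_assoc]
        _ ⊆ headSet (d + 1) + FromSet {P, O, X} x + FromSet Set.univ 1 := by
            gcongr
            · exact Set.subset_union_left
            · exact Set.subset_univ _
  · calc FromSet {O, X} (d + x + 1) = FromSet {O, X} d + FromSet {O, X} x + FromSet {O, X} 1 := by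
          rw [fromSet_add, fromSet_add]
      _ ⊆ headSet d + FromSet {P, O, X} x + FromSet Set.univ 1 := by
          gcongr
          · exact Set.subset_union_right
          · exact Set.subset_insert _ _
          · exact Set.subset_univ _

theorem stmt_3 (Δ x y : ℕ) (h : x + 1 + (y + x) ≤ Δ) :
    Bset Δ x y ⊆ Bset Δ (x + 1) (y + x) := by
  have hd : Δ - x - y = Δ - (x + 1) - (y + x) + x + 1 := by omega
  calc Bset Δ x y
      ⊆ headSet (Δ - (x + 1) - (y + x)) + FromSet {P, O, X} x + FromSet Set.univ 1
          + FromSet {P, O, X} y + FromSet Set.univ x := by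
        rw [bset_eq_add, hd]
        gcongr
        exact headSet_subset_add _ _
    _ = headSet (Δ - (x + 1) - (y + x)) + (FromSet {P, O, X} y + FromSet {P, O, X} x)
          + (FromSet Set.univ x + FromSet Set.univ 1) := by abel
    _ = Bset Δ (x + 1) (y + x) := by rw [fromSet_add, fromSet_add, bset_eq_add]
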